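/- arXiv:1209.0604 — 3 statements merged into one kernel-verified Lean document; each statement's English description precedes it below -/
import Mathlib

section
/- For every integer m >= 2, 2 * sum_{k=1}^infty zeta(m, k)/k = (m+2) * zeta(m+1) - sum_{n=1}^{m-2} zeta(m-n) * zeta(n+1), where zeta(m, k) = sum_{j=0}^infty 1/(j+k)^m is the Hurwitz zeta function and the empty sum is zero. -/
/-
Everything is a nonnegative double series, so the identity is proved in `ℝ≥0∞`, where series can
be rearranged freely, and transferred to `ℝ` at the end. Let
`T(a, b, c) = ∑_{j,k ≥ 1} 1 / (j^a k^b (j+k)^c)` be the Tornheim series and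
`ζ⋆(m, 1) = ∑_{n ≥ k ≥ 1} 1 / (n^m k)`, which is half the left-hand side. Splitting off the diagonal
`n = k` gives `ζ⋆(m, 1) = ζ(m+1) + T(1, 0, m)`. On the other hand
`ζ⋆(m, 1) = ∑ H_n / n^m = T(m-1, 1, 1)`, and the partial fraction `1/(jk) = (1/j + 1/k)/(j+k)`
peels `T(m-1, 1, 1)` down to `2 T(1, 0, m) + ∑_{i=2}^{m-1} T(i, 0, m+1-i)`. Comparing (after
cancelling the finite `T(1, 0, m)`) gives Euler's formula
`ζ(m+1) = T(1, 0, m) + ∑_{i=2}^{m-1} T(i, 0, m+1-i)`. Finally the stuffle relation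
`ζ(p) ζ(q) = T(p, 0, q) + T(q, 0, p) + ζ(p+q)` expresses the products `ζ(m-n) ζ(n+1)` through the
same double series.
-/

open scoped BigOperators

noncomputable def H (n : ℕ) : ℝ := ∑ k ∈ Finset.range n, (1 : ℝ) / (k + 1)

noncomputable def h : ℕ → ℕ → ℝ
  | 0, n => 1 / n
  | r + 1, n => ∑ k ∈ Finset.range n, h r (k + 1)

noncomputable def zeta (m : ℕ) : ℝ := ∑' n : ℕ, (1 : ℝ) / ((n : ℝ) + 1) ^ m

noncomputable def hzeta (m k : ℕ) : ℝ := ∑' j : ℕ, (1 : ℝ) / ((j : ℝ) + k) ^ m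

noncomputable def zetaH (m : ℕ) : ℝ := ∑' n : ℕ, H (n + 1) / ((n : ℝ) + 1) ^ m

def stirling1 : ℕ → ℕ → ℕ
  | 0, 0 => 1
  | 0, _ + 1 => 0
  | _ + 1, 0 => 0
  | n + 1, k + 1 => stirling1 n k + n * stirling1 n (k + 1)

open Finset Filter
open scoped ENNReal Topology

lemma sum_range_one_div_mul_add_one {x : ℝ} (hx : 0 < x) (N : ℕ) :
    ∑ k ∈ range N, 1 / ((x + k) * (x + k + 1)) = 1 / x - 1 / (x + N) := by
  have hterm : ∀ k : ℕ, 1 / ((x + k) * (x + k + 1)) = 1 / (x + k) - 1 / (x + (k + 1 : ℕ)) := by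
    intro k
    have : 0 < x + k := by positivity
    push_cast
    field_simp
    ring
  simp only [hterm, sum_range_sub' (fun k : ℕ => 1 / (x + k)), Nat.cast_zero, add_zero]

lemma hasSum_one_div_mul_add_one {x : ℝ} (hx : 0 < x) :
    HasSum (fun k : ℕ => 1 / ((x + k) * (x + k + 1))) (1 / x) := by
  rw [hasSum_iff_tendsto_nat_of_nonneg (fun k => by positivity)]
  simp only [sum_range_one_div_mul_add_one hx]
  have h : Tendsto (fun N : ℕ => 1 / (x + N)) atTop (𝓝 0) :=
    tendsto_const_nhds.div_atTop (tendsto_atTop_add_const_left _ _ tendsto_natCast_atTop_atTop)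
  simpa using h.const_sub (1 / x)

/-- With `n = j + 1`: `1 / (k (k + n)) = (1 / n) ∑_{i < n} 1 / ((k + i) (k + i + 1))`, and the
`i`-th of these telescoping series sums to `1 / (i + 1)`. -/
lemma hasSum_one_div_mul_eq_H_div (j : ℕ) :
    HasSum (fun k : ℕ => 1 / (((k : ℝ) + 1) * (j + k + 2))) (H (j + 1) / (j + 1)) := by
  set n : ℝ := j + 1
  have hn : 0 < n := by positivity
  have hsplit : ∀ k : ℕ, 1 / (((k : ℝ) + 1) * (j + k + 2)) =
      1 / n * ∑ i ∈ range (j + 1), 1 / (((k : ℝ) + 1 + i) * (k + 1 + i + 1)) := by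
    intro k
    rw [sum_range_one_div_mul_add_one (by positivity)]
    have : (0 : ℝ) < k + 1 := by positivity
    have : (0 : ℝ) < j + k + 2 := by positivity
    push_cast
    field_simp
    ring
  have htel : HasSum (fun k : ℕ => ∑ i ∈ range (j + 1), 1 / (((k : ℝ) + 1 + i) * (k + 1 + i + 1)))
      (H (j + 1)) := by
    refine hasSum_sum fun i _ => ?_
    convert hasSum_one_div_mul_add_one (x := (i : ℝ) + 1) (by positivity) using 2 with k
    ring
  simp only [hsplit]
  simpa [div_eq_inv_mul, n] using htel.mul_left (1 / n)

lemma tsum_ofReal_of_hasSum {ι : Type*} {f : ι → ℝ} {a : ℝ} (hf : HasSum f a) (h0 : ∀ i, 0 ≤ f i) :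
    ∑' i, ENNReal.ofReal (f i) = ENNReal.ofReal a := by
  rw [← ENNReal.ofReal_tsum_of_nonneg h0 hf.summable, hf.tsum_eq]

lemma tsum_eq_toReal_tsum_ofReal {ι : Type*} {f : ι → ℝ} (h0 : ∀ i, 0 ≤ f i) :
    ∑' i, f i = (∑' i, ENNReal.ofReal (f i)).toReal := by
  rw [ENNReal.tsum_toReal_eq fun _ => ENNReal.ofReal_ne_top]
  exact tsum_congr fun i => (ENNReal.toReal_ofReal (h0 i)).symm

lemma tsum_shear_eq_tsum_sum_range (f : ℕ → ℕ → ℝ≥0∞) :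
    ∑' x : ℕ × ℕ, f x.1 (x.1 + x.2) = ∑' n, ∑ i ∈ range (n + 1), f i n := by
  rw [← HasAntidiagonal.sigmaAntidiagonalEquivProd.tsum_eq, ENNReal.tsum_sigma']
  refine tsum_congr fun n => ?_
  simp only [HasAntidiagonal.sigmaAntidiagonalEquivProd_apply]
  rw [Finset.tsum_subtype (HasAntidiagonal.antidiagonal n) fun x => f x.1 (x.1 + x.2),
    Nat.sum_antidiagonal_eq_sum_range_succ (fun i k => f i (i + k))]
  refine sum_congr rfl fun i hi => ?_
  rw [Nat.add_sub_cancel' (Nat.lt_succ_iff.mp (mem_range.mp hi))]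

lemma tsum_shear_eq_tsum_diag_add (f : ℕ → ℕ → ℝ≥0∞) :
    ∑' x : ℕ × ℕ, f x.1 (x.1 + x.2) = ∑' n, f n n + ∑' x : ℕ × ℕ, f x.1 (x.1 + x.2 + 1) := by
  rw [ENNReal.tsum_prod', ENNReal.tsum_prod', ← ENNReal.tsum_add]
  exact tsum_congr fun n => tsum_eq_zero_add' ENNReal.summable

lemma tsum_prod_eq_tsum_shear_add (f : ℕ → ℕ → ℝ≥0∞) :
    ∑' x : ℕ × ℕ, f x.1 x.2 =
      ∑' x : ℕ × ℕ, f x.1 (x.1 + x.2) + ∑' x : ℕ × ℕ, f (x.1 + x.2 + 1) x.1 := by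
  set up : ℕ × ℕ → ℕ × ℕ := fun x => (x.1, x.1 + x.2)
  set down : ℕ × ℕ → ℕ × ℕ := fun x => (x.1 + x.2 + 1, x.1)
  have hup : Function.Injective up := fun x y h => by
    simp only [up, Prod.mk.injEq] at h; ext <;> omega
  have hdown : Function.Injective down := fun x y h => by
    simp only [down, Prod.mk.injEq] at h; ext <;> omega
  have hdisj : Disjoint (Set.range up) (Set.range down) := by
    rw [Set.disjoint_left]
    rintro _ ⟨x, rfl⟩ ⟨y, hy⟩
    simp only [up, down, Prod.mk.injEq] at hy
    omega
  have hcover : Set.range up ∪ Set.range down = Set.univ := by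
    refine Set.eq_univ_of_forall fun ⟨a, b⟩ => ?_
    rcases le_or_gt a b with hab | hab
    · exact Or.inl ⟨(a, b - a), by simp only [up]; congr; omega⟩
    · exact Or.inr ⟨(b, a - b - 1), by simp only [down]; congr 1; omega⟩
  rw [← tsum_range (fun x => f x.1 x.2) hup, ← tsum_range (fun x => f x.1 x.2) hdown,
    ← Summable.tsum_union_disjoint (f := fun x : ℕ × ℕ => f x.1 x.2) hdisj ENNReal.summable
      ENNReal.summable, hcover, tsum_univ (fun x : ℕ × ℕ => f x.1 x.2)]

noncomputable def zetaEnn (s : ℕ) : ℝ≥0∞ := ∑' n : ℕ, ENNReal.ofReal (1 / ((n : ℝ) + 1) ^ s)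

noncomputable def zetaHEnn (m : ℕ) : ℝ≥0∞ :=
  ∑' n : ℕ, ENNReal.ofReal (H (n + 1) / ((n : ℝ) + 1) ^ m)

noncomputable def zetaStarEnn (m : ℕ) : ℝ≥0∞ :=
  ∑' x : ℕ × ℕ, ENNReal.ofReal (1 / (((x.1 : ℝ) + 1) * ((x.1 : ℝ) + x.2 + 1) ^ m))

noncomputable def tornheim (a b c : ℕ) : ℝ≥0∞ :=
  ∑' x : ℕ × ℕ, ENNReal.ofReal
    (1 / (((x.1 : ℝ) + 1) ^ a * ((x.2 : ℝ) + 1) ^ b * ((x.1 : ℝ) + x.2 + 2) ^ c))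

lemma summable_one_div_add_one_pow {s : ℕ} (hs : 2 ≤ s) :
    Summable fun n : ℕ => 1 / ((n : ℝ) + 1) ^ s := by
  have := (summable_nat_add_iff 1).mpr (Real.summable_one_div_nat_pow.mpr hs)
  exact_mod_cast this

lemma zeta_eq_toReal_zetaEnn (s : ℕ) : zeta s = (zetaEnn s).toReal :=
  tsum_eq_toReal_tsum_ofReal fun n => by positivity

lemma zetaEnn_ne_top {s : ℕ} (hs : 2 ≤ s) : zetaEnn s ≠ ∞ := by
  rw [zetaEnn, ← ENNReal.ofReal_tsum_of_nonneg (fun n => by positivity)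
    (summable_one_div_add_one_pow hs)]
  exact ENNReal.ofReal_ne_top

lemma tornheim_comm (a b c : ℕ) : tornheim a b c = tornheim b a c := by
  rw [tornheim, ← (Equiv.prodComm ℕ ℕ).tsum_eq]
  refine tsum_congr fun x => ?_
  simp only [Equiv.prodComm_apply, Prod.fst_swap, Prod.snd_swap]
  ring_nf

lemma tornheim_succ_succ (a b c : ℕ) :
    tornheim (a + 1) (b + 1) c = tornheim a (b + 1) (c + 1) + tornheim (a + 1) b (c + 1) := by
  simp only [tornheim]
  rw [← ENNReal.tsum_add]
  refine tsum_congr fun x => ?_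
  rw [← ENNReal.ofReal_add (by positivity) (by positivity)]
  congr 1
  have : (0 : ℝ) < x.1 + 1 := by positivity
  have : (0 : ℝ) < x.2 + 1 := by positivity
  field_simp
  ring

lemma tornheim_one_one (c : ℕ) : tornheim 1 1 c = 2 * tornheim 1 0 (c + 1) := by
  rw [tornheim_succ_succ, tornheim_comm 0, two_mul]

lemma tornheim_succ_one (a b : ℕ) :
    tornheim (a + 1) 1 b =
      tornheim 1 1 (a + b) + ∑ i ∈ range a, tornheim (i + 2) 0 (a + b - i) := by
  induction a generalizing b with
  | zero => simp
  | succ a ih =>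
    rw [tornheim_succ_succ, ih, sum_range_succ, add_assoc]
    congr 2
    · omega
    · exact sum_congr rfl fun i _ => by congr 1; omega
    · congr 1; omega

lemma tornheim_succ_one_one (c : ℕ) : tornheim (c + 1) 1 1 = zetaHEnn (c + 2) := by
  rw [tornheim, ENNReal.tsum_prod']
  refine tsum_congr fun j => ?_
  have hinner := tsum_ofReal_of_hasSum (hasSum_one_div_mul_eq_H_div j) fun k => by positivity
  calc ∑' k : ℕ, ENNReal.ofReal
        (1 / (((j : ℝ) + 1) ^ (c + 1) * ((k : ℝ) + 1) ^ 1 * ((j : ℝ) + k + 2) ^ 1))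
      = ∑' k : ℕ, ENNReal.ofReal (1 / ((j : ℝ) + 1) ^ (c + 1)) *
          ENNReal.ofReal (1 / (((k : ℝ) + 1) * (j + k + 2))) := by
        refine tsum_congr fun k => ?_
        rw [← ENNReal.ofReal_mul (by positivity), pow_one, pow_one, one_div_mul_one_div, mul_assoc]
    _ = ENNReal.ofReal (H (j + 1) / ((j : ℝ) + 1) ^ (c + 2)) := by
        rw [ENNReal.tsum_mul_left, hinner, ← ENNReal.ofReal_mul (by positivity), div_mul_div_comm,
          one_mul, ← pow_succ]

lemma zetaStarEnn_eq_zetaHEnn (m : ℕ) : zetaStarEnn m = zetaHEnn m := by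
  have := tsum_shear_eq_tsum_sum_range fun i n =>
    ENNReal.ofReal (1 / (((i : ℝ) + 1) * ((n : ℝ) + 1) ^ m))
  simp only [Nat.cast_add] at this
  rw [zetaStarEnn, this, zetaHEnn]
  refine tsum_congr fun n => ?_
  rw [← ENNReal.ofReal_sum_of_nonneg fun i _ => by positivity, H, sum_div]
  congr 1
  exact sum_congr rfl fun i _ => by rw [div_div]

lemma zetaStarEnn_eq_zetaEnn_add_tornheim (m : ℕ) :
    zetaStarEnn m = zetaEnn (m + 1) + tornheim 1 0 m := by
  have := tsum_shear_eq_tsum_diag_add fun i n =>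
    ENNReal.ofReal (1 / (((i : ℝ) + 1) * ((n : ℝ) + 1) ^ m))
  simp only [Nat.cast_add, Nat.cast_one] at this
  rw [zetaStarEnn, this, zetaEnn, tornheim]
  congr 1 <;> refine tsum_congr fun x => ?_ <;> ring_nf

lemma zetaEnn_mul_zetaEnn (p q : ℕ) :
    zetaEnn p * zetaEnn q = tornheim p 0 q + tornheim q 0 p + zetaEnn (p + q) := by
  let f (a b : ℕ) := ENNReal.ofReal (1 / (((a : ℝ) + 1) ^ p * ((b : ℝ) + 1) ^ q))
  have hsplit := tsum_prod_eq_tsum_shear_add f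
  rw [tsum_shear_eq_tsum_diag_add f] at hsplit
  simp only [f, Nat.cast_add, Nat.cast_one] at hsplit
  have hprod : zetaEnn p * zetaEnn q =
      ∑' x : ℕ × ℕ, ENNReal.ofReal (1 / (((x.1 : ℝ) + 1) ^ p * ((x.2 : ℝ) + 1) ^ q)) := by
    rw [zetaEnn, zetaEnn, ENNReal.tsum_prod', ← ENNReal.tsum_mul_right]
    refine tsum_congr fun a => ?_
    rw [← ENNReal.tsum_mul_left]
    refine tsum_congr fun b => ?_
    rw [← ENNReal.ofReal_mul (by positivity), one_div_mul_one_div]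
  rw [hprod, hsplit, zetaEnn, tornheim, tornheim, add_rotate]
  congr 1
  · congr 1 <;> refine tsum_congr fun x => ?_ <;> ring_nf
  · refine tsum_congr fun n => ?_
    ring_nf

lemma tornheim_one_zero_ne_top {c : ℕ} (hc : 2 ≤ c) : tornheim 1 0 c ≠ ∞ := by
  refine ne_top_of_le_ne_top (zetaEnn_ne_top le_rfl) ?_
  rw [tornheim, ENNReal.tsum_prod', zetaEnn]
  refine ENNReal.tsum_le_tsum fun j => ?_
  have hj : (0 : ℝ) < j + 1 := by positivity
  have htel := tsum_ofReal_of_hasSum (hasSum_one_div_mul_add_one hj) fun k => by positivity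
  calc ∑' k : ℕ, ENNReal.ofReal
        (1 / (((j : ℝ) + 1) ^ 1 * ((k : ℝ) + 1) ^ 0 * ((j : ℝ) + k + 2) ^ c))
      ≤ ∑' k : ℕ, ENNReal.ofReal (1 / ((j : ℝ) + 1)) *
          ENNReal.ofReal (1 / (((j : ℝ) + 1 + k) * ((j : ℝ) + 1 + k + 1))) := by
        refine ENNReal.tsum_le_tsum fun k => ?_
        rw [← ENNReal.ofReal_mul (by positivity), one_div_mul_one_div]
        refine ENNReal.ofReal_le_ofReal (one_div_le_one_div_of_le (by positivity) ?_)
        rw [pow_one, pow_zero, mul_one]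
        refine mul_le_mul_of_nonneg_left ?_ hj.le
        calc ((j : ℝ) + 1 + k) * ((j : ℝ) + 1 + k + 1) ≤ ((j : ℝ) + k + 2) ^ 2 := by nlinarith
          _ ≤ ((j : ℝ) + k + 2) ^ c := pow_le_pow_right₀ (by linarith) hc
    _ = ENNReal.ofReal (1 / ((j : ℝ) + 1) ^ 2) := by
        rw [ENNReal.tsum_mul_left, htel, ← ENNReal.ofReal_mul (by positivity), one_div_mul_one_div,
          sq]

lemma zetaEnn_eq_tornheim_add_sum (M : ℕ) :
    zetaEnn (M + 3) = tornheim 1 0 (M + 2) + ∑ i ∈ range M, tornheim (i + 2) 0 (M + 1 - i) := by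
  have hdiag := zetaStarEnn_eq_zetaEnn_add_tornheim (M + 2)
  have hharm : zetaStarEnn (M + 2) =
      2 * tornheim 1 0 (M + 2) + ∑ i ∈ range M, tornheim (i + 2) 0 (M + 1 - i) := by
    rw [zetaStarEnn_eq_zetaHEnn, ← tornheim_succ_one_one, tornheim_succ_one, tornheim_one_one]
  refine (ENNReal.add_right_inj (tornheim_one_zero_ne_top (c := M + 2) (by omega))).mp ?_
  rw [← add_assoc, ← two_mul, ← hharm, hdiag]
  exact add_comm _ _

lemma sum_zetaEnn_mul_zetaEnn (M : ℕ) :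
    ∑ n ∈ Icc 1 M, zetaEnn (M + 2 - n) * zetaEnn (n + 1) =
      2 * ∑ i ∈ range M, tornheim (i + 2) 0 (M + 1 - i) + M * zetaEnn (M + 3) := by
  rw [← Ico_add_one_right_eq_Icc, sum_Ico_eq_sum_range, Nat.add_sub_cancel]
  have hterm : ∀ i ∈ range M, zetaEnn (M + 2 - (1 + i)) * zetaEnn (1 + i + 1) =
      tornheim (M + 1 - i) 0 (i + 2) + tornheim (i + 2) 0 (M + 1 - i) + zetaEnn (M + 3) := by
    intro i hi
    have hi := mem_range.mp hi
    rw [zetaEnn_mul_zetaEnn, show M + 2 - (1 + i) = M + 1 - i by omega,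
      show 1 + i + 1 = i + 2 by omega, show M + 1 - i + (i + 2) = M + 3 by omega]
  have hreflect : ∑ i ∈ range M, tornheim (M + 1 - i) 0 (i + 2) =
      ∑ i ∈ range M, tornheim (i + 2) 0 (M + 1 - i) := by
    rw [← sum_range_reflect]
    exact sum_congr rfl fun i hi => by have := mem_range.mp hi; congr 1 <;> omega
  rw [sum_congr rfl hterm, sum_add_distrib, sum_add_distrib, hreflect, sum_const, card_range,
    nsmul_eq_mul, two_mul]

lemma two_mul_zetaStarEnn_add_sum {m : ℕ} (hm : 2 ≤ m) :
    2 * zetaStarEnn m + ∑ n ∈ Icc 1 (m - 2), zetaEnn (m - n) * zetaEnn (n + 1) =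
      (m + 2) * zetaEnn (m + 1) := by
  obtain ⟨M, rfl⟩ : ∃ M, m = M + 2 := ⟨m - 2, by omega⟩
  rw [Nat.add_sub_cancel, sum_zetaEnn_mul_zetaEnn, zetaStarEnn_eq_zetaEnn_add_tornheim]
  calc 2 * (zetaEnn (M + 2 + 1) + tornheim 1 0 (M + 2)) +
        (2 * ∑ i ∈ range M, tornheim (i + 2) 0 (M + 1 - i) + M * zetaEnn (M + 3))
      = 2 * zetaEnn (M + 3) + 2 * zetaEnn (M + 3) + M * zetaEnn (M + 3) := by
        rw [zetaEnn_eq_tornheim_add_sum M]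
        ring
    _ = ((M + 2 : ℕ) + 2) * zetaEnn (M + 2 + 1) := by
        push_cast
        ring

lemma tsum_hzeta_div_eq_toReal {m : ℕ} (hm : 2 ≤ m) :
    ∑' k : ℕ, hzeta m (k + 1) / ((k : ℝ) + 1) = (zetaStarEnn m).toReal := by
  have hnonneg : ∀ k : ℕ, 0 ≤ hzeta m (k + 1) / ((k : ℝ) + 1) :=
    fun k => div_nonneg (tsum_nonneg fun j => by positivity) (by positivity)
  rw [tsum_eq_toReal_tsum_ofReal hnonneg, zetaStarEnn, ENNReal.tsum_prod']
  congr 1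
  refine tsum_congr fun k => ?_
  have hsum : Summable fun j : ℕ => 1 / ((j : ℝ) + (k + 1 : ℕ)) ^ m := by
    have := (summable_nat_add_iff k).mpr (summable_one_div_add_one_pow hm)
    refine this.congr fun j => ?_
    push_cast
    ring
  rw [hzeta, ← tsum_div_const, ENNReal.ofReal_tsum_of_nonneg (fun j => by positivity)
    (hsum.div_const _)]
  refine tsum_congr fun j => ?_
  rw [div_div]
  congr 2
  push_cast
  ring

theorem stmt6 (m : ℕ) (hm : 2 ≤ m) :
    2 * ∑' k : ℕ, hzeta m (k + 1) / ((k : ℝ) + 1) =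
      (m + 2) * zeta (m + 1) - ∑ n ∈ Finset.Icc 1 (m - 2), zeta (m - n) * zeta (n + 1) := by
  have hmain := two_mul_zetaStarEnn_add_sum hm
  have hprod_ne_top : ∀ n ∈ Icc 1 (m - 2), zetaEnn (m - n) * zetaEnn (n + 1) ≠ ∞ := fun n hn =>
    have := mem_Icc.mp hn
    ENNReal.mul_ne_top (zetaEnn_ne_top (by omega)) (zetaEnn_ne_top (by omega))
  have hrhs_ne_top : ((m : ℝ≥0∞) + 2) * zetaEnn (m + 1) ≠ ∞ :=
    ENNReal.mul_ne_top (by simp) (zetaEnn_ne_top (by omega))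
  have hlhs_ne_top := hmain ▸ hrhs_ne_top
  rw [ENNReal.add_ne_top] at hlhs_ne_top
  have hreal := congrArg ENNReal.toReal hmain
  rw [ENNReal.toReal_add hlhs_ne_top.1 hlhs_ne_top.2, ENNReal.toReal_mul, ENNReal.toReal_mul,
    ENNReal.toReal_sum hprod_ne_top] at hreal
  simp only [ENNReal.toReal_mul, ← zeta_eq_toReal_zetaEnn, ← tsum_hzeta_div_eq_toReal hm] at hreal
  rw [ENNReal.toReal_ofNat, show ((m : ℝ≥0∞) + 2).toReal = m + 2 by norm_cast] at hreal
  linarith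
end

section
/- For integers 1 <= r < m, sum_{n=1}^infty h_n^(r)/n^m = (1/(r-1)!) * sum_{k=1}^r [r choose k]_1 * ( sum_{n=1}^infty H_n/n^{m-k+1} - H_{r-1} * zeta(m-k+1) + sum_{j=1}^{r-1} sum_{n=1}^infty 1/(n^{m-k+1}(n+j)) ), where [.]_1 are unsigned Stirling numbers of the first kind. -/
open scoped BigOperators

/-!
The hyperharmonic numbers have the closed form
`h_n^(s+1) = C(n+s, s) (H_{n+s} - H_s)`, and `H_{n+s} = H_n + ∑_{j=1}^s 1/(n+j)`.
Moreover `s! C(n+s, s) n` is the rising factorial `n (n+1) ⋯ (n+s) = ∑_k [s+1 k] n^k`,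
so `h_n^(s+1) / n^m` is `1/s!` times a finite combination of the summands
`H_n / n^(m-k+1)`, `1 / n^(m-k+1)` and `1 / (n^(m-k+1) (n+j))`, each of which is summable
because `m - k + 1 ≥ 2`; the series is then summed term by term.
-/

open Finset Polynomial

lemma stirling1_eq_stirlingFirst : stirling1 = Nat.stirlingFirst := by
  funext n k
  induction n generalizing k with
  | zero => cases k <;> rfl
  | succ n ih =>
    cases k with
    | zero => rfl
    | succ k => rw [stirling1, Nat.stirlingFirst_succ_succ, ih, ih, Nat.add_comm]

lemma coeff_ascPochhammer_nat (n k : ℕ) :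
    (ascPochhammer ℕ n).coeff k = Nat.stirlingFirst n k := by
  induction n generalizing k with
  | zero => cases k <;> simp [coeff_one]
  | succ n ih =>
    cases k with
    | zero => simp [ascPochhammer_succ_left]
    | succ k =>
      rw [ascPochhammer_succ_right, mul_add, coeff_add, coeff_mul_X, ← C_eq_natCast, coeff_mul_C,
        ih, ih, Nat.stirlingFirst_succ_succ, Nat.add_comm, Nat.mul_comm, Nat.cast_id]

lemma ascPochhammer_eval_eq_sum_stirlingFirst {R : Type*} [CommSemiring R] (n : ℕ) (x : R) :
    (ascPochhammer R n).eval x = ∑ k ∈ range (n + 1), (Nat.stirlingFirst n k : R) * x ^ k := by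
  rw [← ascPochhammer_map (Nat.castRingHom R), eval_map,
    eval₂_eq_sum_range' _ (by simp : (ascPochhammer ℕ n).natDegree < n + 1)]
  simp [coeff_ascPochhammer_nat]

lemma ascPochhammer_eval_succ_eq_factorial_mul_choose (n s : ℕ) :
    (ascPochhammer ℝ (s + 1)).eval ((n : ℝ) + 1)
      = (n + 1) * s.factorial * (n + 1 + s).choose s := by
  have h := Nat.succ_ascFactorial (n + 1) s
  rw [Nat.ascFactorial_eq_factorial_mul_choose, ← Nat.ascFactorial_succ] at h
  rw [← Nat.cast_add_one, ascPochhammer_nat_eq_natCast_ascFactorial, ← h]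
  push_cast
  ring

lemma H_eq_harmonic (n : ℕ) : H n = harmonic n := by
  simp [H, harmonic]

lemma H_succ (n : ℕ) : H (n + 1) = H n + 1 / (n + 1) := by
  simp [H, sum_range_succ]

lemma H_add (a t : ℕ) : H (a + t) = H a + ∑ j ∈ Icc 1 t, (1 : ℝ) / ((a : ℝ) + j) := by
  induction t with
  | zero => simp
  | succ t ih =>
    rw [← Nat.add_assoc, H_succ, ih, sum_Icc_succ_top (by omega)]
    push_cast
    ring

lemma h_succ_succ (s n : ℕ) : h (s + 1) (n + 1) = h (s + 1) n + h s (n + 1) := by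
  simp only [h, sum_range_succ]

lemma h_succ_eq (s n : ℕ) : h (s + 1) n = (n + s).choose s * (H (n + s) - H s) := by
  induction s generalizing n with
  | zero => simp [h, H]
  | succ s ihs =>
    induction n with
    | zero => simp [h]
    | succ n ihn =>
      rw [h_succ_succ, ihn, ihs, show n + 1 + (s + 1) = n + s + 1 + 1 by ring,
        show n + (s + 1) = n + s + 1 by ring, show n + 1 + s = n + s + 1 by ring,
        H_succ (n + s + 1), H_succ s]
      have pascal : ((n + s + 2).choose (s + 1) : ℝ)
          = (n + s + 1).choose s + (n + s + 1).choose (s + 1) := by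
        exact_mod_cast Nat.choose_succ_succ' (n + s + 1) s
      have absorb : ((n + s + 2).choose (s + 1) : ℝ) / (n + s + 2)
          = (n + s + 1).choose s / (s + 1) := by
        rw [div_eq_div_iff (by positivity) (by positivity)]
        exact_mod_cast (Nat.add_one_mul_choose_eq (n + s + 1) s).symm.trans (Nat.mul_comm _ _)
      push_cast
      linear_combination (1 / ((s : ℝ) + 1) + H s - H (n + s + 1)) * pascal - absorb

lemma sum_stirlingFirst_div_pow {r m : ℕ} (hr : 1 ≤ r) (hrm : r ≤ m) {x : ℝ}
    (hx : x ≠ 0) :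
    ∑ k ∈ Icc 1 r, (Nat.stirlingFirst r k : ℝ) / x ^ (m - k + 1)
      = (ascPochhammer ℝ r).eval x / x ^ (m + 1) := by
  obtain ⟨s, rfl⟩ := Nat.exists_eq_add_of_le' hr
  rw [ascPochhammer_eval_eq_sum_stirlingFirst, sum_div, range_eq_Ico,
    sum_eq_sum_Ico_succ_bot (by omega), Nat.stirlingFirst_succ_zero, Ico_add_one_right_eq_Icc]
  simp only [Nat.cast_zero, zero_mul, zero_div, zero_add]
  refine sum_congr rfl fun k hk => ?_
  have hkm : k ≤ m := by grind
  rw [show m + 1 = (m - k + 1) + k by omega, pow_add _ (m - k + 1) k,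
    mul_div_mul_right _ _ (pow_ne_zero k hx)]

lemma h_succ_div_pow_eq {s m : ℕ} (hm : s + 1 ≤ m) (n : ℕ) :
    h (s + 1) (n + 1) / ((n : ℝ) + 1) ^ m
      = 1 / (s.factorial : ℝ) * ∑ k ∈ Icc 1 (s + 1), (stirling1 (s + 1) k : ℝ) *
          (H (n + 1) / ((n : ℝ) + 1) ^ (m - k + 1) - H s * (1 / ((n : ℝ) + 1) ^ (m - k + 1))
            + ∑ j ∈ Icc 1 s, 1 / (((n : ℝ) + 1) ^ (m - k + 1) * ((n : ℝ) + 1 + j))) := by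
  set x : ℝ := n + 1 with hx_def
  have hx : x ≠ 0 := by positivity
  set D := H (n + 1) - H s + ∑ j ∈ Icc 1 s, 1 / (x + j)
  have hh : h (s + 1) (n + 1) = (n + 1 + s).choose s * D := by
    rw [h_succ_eq, H_add]
    push_cast
    ring
  have hbracket : ∀ e : ℕ, H (n + 1) / x ^ e - H s * (1 / x ^ e)
      + ∑ j ∈ Icc 1 s, 1 / (x ^ e * (x + j)) = D / x ^ e := by
    intro e
    simp only [D, add_div, sub_div, sum_div, div_div, mul_one_div, mul_comm (x ^ e)]
  simp_rw [hbracket, ← mul_comm_div, ← sum_mul, stirling1_eq_stirlingFirst]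
  rw [sum_stirlingFirst_div_pow (by omega) hm hx, hx_def,
    ascPochhammer_eval_succ_eq_factorial_mul_choose, hh]
  field_simp
  ring

lemma summable_one_div_succ_pow {p : ℕ} (hp : 2 ≤ p) :
    Summable fun n : ℕ => 1 / ((n : ℝ) + 1) ^ p := by
  simpa using (summable_nat_add_iff 1).2 (Real.summable_one_div_nat_pow.2 hp)

lemma summable_one_div_succ_pow_mul {p : ℕ} (hp : 2 ≤ p) (j : ℕ) :
    Summable fun n : ℕ => 1 / (((n : ℝ) + 1) ^ p * ((n : ℝ) + 1 + j)) := by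
  refine (summable_one_div_succ_pow hp).of_nonneg_of_le (fun n => by positivity) fun n => ?_
  gcongr
  exact le_mul_of_one_le_right (by positivity) (by linarith [(j.cast_nonneg : (0 : ℝ) ≤ j)])

lemma H_succ_le_rpow (n : ℕ) : H (n + 1) ≤ 3 * ((n : ℝ) + 1) ^ (1 / 2 : ℝ) := by
  have hlog :=
    Real.log_le_rpow_div (by positivity : (0 : ℝ) ≤ n + 1) (by norm_num : (0 : ℝ) < 1 / 2)
  have hone : 1 ≤ ((n : ℝ) + 1) ^ (1 / 2 : ℝ) := Real.one_le_rpow (by simp) (by norm_num)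
  have hH := harmonic_le_one_add_log (n + 1)
  rw [H_eq_harmonic]
  push_cast at hH
  linarith

lemma summable_H_succ_div_succ_pow {p : ℕ} (hp : 2 ≤ p) :
    Summable fun n : ℕ => H (n + 1) / ((n : ℝ) + 1) ^ p := by
  have hsum : Summable fun n : ℕ => 3 * (1 / |(n : ℝ) + 1| ^ (3 / 2 : ℝ)) :=
    ((Real.summable_one_div_nat_add_rpow 1 _).2 (by norm_num)).mul_left 3
  refine hsum.of_nonneg_of_le (fun n => by unfold H; positivity) fun n => ?_
  set x : ℝ := n + 1
  have hx : 1 ≤ x := by simp [x]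
  calc H (n + 1) / x ^ p ≤ 3 * x ^ (1 / 2 : ℝ) / x ^ (2 : ℝ) := by
        rw [Real.rpow_two]
        gcongr
        exact H_succ_le_rpow n
    _ = 3 * (1 / |x| ^ (3 / 2 : ℝ)) := by
        rw [abs_of_pos (by positivity), mul_div_assoc, ← Real.rpow_sub (by positivity),
          one_div (x ^ _), ← Real.rpow_neg (by positivity)]
        norm_num

lemma hasSum_H_div_sub_add_sum {p : ℕ} (hp : 2 ≤ p) (c : ℝ) (s : ℕ) :
    HasSum (fun n : ℕ => H (n + 1) / ((n : ℝ) + 1) ^ p - c * (1 / ((n : ℝ) + 1) ^ p)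
        + ∑ j ∈ Icc 1 s, 1 / (((n : ℝ) + 1) ^ p * ((n : ℝ) + 1 + j)))
      (zetaH p - c * zeta p
        + ∑ j ∈ Icc 1 s, ∑' n : ℕ, 1 / (((n : ℝ) + 1) ^ p * ((n : ℝ) + 1 + j))) :=
  ((summable_H_succ_div_succ_pow hp).hasSum.sub
    ((summable_one_div_succ_pow hp).hasSum.mul_left c)).add
    (hasSum_sum fun j _ => (summable_one_div_succ_pow_mul hp j).hasSum)

theorem stmt10 (r m : ℕ) (hr : 1 ≤ r) (hm : r < m) :
    ∑' n : ℕ, h r (n + 1) / ((n : ℝ) + 1) ^ m =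
      (1 / ((r - 1).factorial : ℝ)) *
        ∑ k ∈ Finset.Icc 1 r,
          (stirling1 r k : ℝ) *
            (zetaH (m - k + 1) - H (r - 1) * zeta (m - k + 1) +
              ∑ j ∈ Finset.Icc 1 (r - 1),
                ∑' n : ℕ, (1 : ℝ) / (((n : ℝ) + 1) ^ (m - k + 1) * ((n : ℝ) + 1 + j))) := by
  obtain ⟨s, rfl⟩ := Nat.exists_eq_add_of_le' hr
  rw [Nat.add_sub_cancel, tsum_congr (h_succ_div_pow_eq hm.le)]
  refine (HasSum.mul_left _ (hasSum_sum fun k hk => ?_)).tsum_eq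
  exact (hasSum_H_div_sub_add_sum (by grind) _ s).mul_left _
end

section
/- For every positive integer r, sum_{n=1}^infty h_n^(r) * B(r+1, n+1) = 1, where B is the Beta function B(x,y) = integral_0^1 t^{x-1}(1-t)^{y-1} dt. -/
open scoped BigOperators

open Filter Finset
open scoped ENNReal

/-!
Write `β(r, n) = ∫₀¹ tʳ (1 - t)ⁿ dt = B(r + 1, n + 1)` (`betaNat r n`).
From `tʳ⁺¹ (1 - t)ⁿ = tʳ (1 - t)ⁿ - tʳ (1 - t)ⁿ⁺¹` the tails telescope:
`∑_{n ≥ m} β(r + 1, n) = β(r, m)`. Expanding `h (r + 1) n = ∑_{k ≤ n} h r k` and interchanging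
the nonnegative double sum (done in `ℝ≥0∞`, where no summability is needed) gives
`∑ₙ h (r + 1) n · β(r + 1, n) = ∑ₖ h r k · β(r, k)`, and for `r = 0`, where `h 0 n = 1 / n`,
the sum telescopes to `1`.
-/

theorem ENNReal.tsum_sum_range_succ_mul (a b : ℕ → ℝ≥0∞) :
    ∑' n, (∑ k ∈ range (n + 1), a k) * b n = ∑' k, a k * ∑' j, b (j + k) := by
  simp_rw [← ENNReal.tsum_mul_left]
  rw [← ENNReal.tsum_prod (f := fun k j => a k * b (j + k)),
    ← HasAntidiagonal.sigmaAntidiagonalEquivProd.tsum_eq, ENNReal.tsum_sigma']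
  refine tsum_congr fun n => ?_
  refine Eq.trans ?_ (Finset.tsum_subtype (antidiagonal n) fun p => a p.1 * b (p.2 + p.1)).symm
  rw [Finset.sum_mul, Nat.sum_antidiagonal_eq_sum_range_succ_mk]
  refine Finset.sum_congr rfl fun k hk => ?_
  rw [Nat.sub_add_cancel (Nat.lt_succ_iff.1 (mem_range.1 hk))]

theorem hasSum_sub_succ_of_antitone {f : ℕ → ℝ} (hf : Antitone f)
    (hlim : Tendsto f atTop (nhds 0)) : HasSum (fun n => f n - f (n + 1)) (f 0) := by
  rw [hasSum_iff_tendsto_nat_of_nonneg fun n => sub_nonneg.2 (hf n.le_succ)]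
  simp_rw [Finset.sum_range_sub']
  simpa using tendsto_const_nhds.sub hlim

noncomputable def betaNat (r n : ℕ) : ℝ := ∫ t in (0 : ℝ)..1, t ^ r * (1 - t) ^ n

theorem intervalIntegrable_betaNat_integrand (r n : ℕ) :
    IntervalIntegrable (fun t : ℝ => t ^ r * (1 - t) ^ n) MeasureTheory.volume 0 1 :=
  (by fun_prop : Continuous fun t : ℝ => t ^ r * (1 - t) ^ n).intervalIntegrable 0 1

theorem betaNat_nonneg (r n : ℕ) : 0 ≤ betaNat r n :=
  intervalIntegral.integral_nonneg zero_le_one fun _ ht =>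
    mul_nonneg (pow_nonneg ht.1 r) (pow_nonneg (sub_nonneg.2 ht.2) n)

theorem betaNat_zero_left (n : ℕ) : betaNat 0 n = 1 / (n + 1) := by
  simp [betaNat, intervalIntegral.integral_comp_sub_left (fun x : ℝ => x ^ n) 1]

theorem betaNat_succ_left (r n : ℕ) : betaNat (r + 1) n = betaNat r n - betaNat r (n + 1) := by
  rw [betaNat, betaNat, betaNat, ← intervalIntegral.integral_sub
    (intervalIntegrable_betaNat_integrand r n) (intervalIntegrable_betaNat_integrand r (n + 1))]
  congr 1
  funext t
  ring

theorem betaNat_le (r n : ℕ) : betaNat r n ≤ 1 / (n + 1) := by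
  rw [← betaNat_zero_left n]
  refine intervalIntegral.integral_mono_on zero_le_one (intervalIntegrable_betaNat_integrand r n)
    (intervalIntegrable_betaNat_integrand 0 n) fun t ht => ?_
  rw [pow_zero, one_mul]
  exact mul_le_of_le_one_left (pow_nonneg (sub_nonneg.2 ht.2) n) (pow_le_one₀ ht.1 ht.2)

theorem tendsto_betaNat (r : ℕ) : Tendsto (betaNat r) atTop (nhds 0) :=
  squeeze_zero (betaNat_nonneg r) (betaNat_le r) tendsto_one_div_add_atTop_nhds_zero_nat

theorem betaNat_antitone (r : ℕ) : Antitone (betaNat r) :=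
  antitone_nat_of_succ_le fun n => by
    linarith [betaNat_succ_left r n, betaNat_nonneg (r + 1) n]

theorem hasSum_betaNat_succ_left (r m : ℕ) :
    HasSum (fun j => betaNat (r + 1) (j + m)) (betaNat r m) := by
  have := hasSum_sub_succ_of_antitone (f := fun j => betaNat r (j + m))
    ((betaNat_antitone r).comp_monotone fun _ _ hle => Nat.add_le_add_right hle m)
    ((tendsto_betaNat r).comp (tendsto_add_atTop_nat m))
  simpa only [betaNat_succ_left, add_right_comm _ 1 m, zero_add] using this

theorem tsum_ofReal_betaNat_succ_left (r m : ℕ) :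
    ∑' j, ENNReal.ofReal (betaNat (r + 1) (j + m)) = ENNReal.ofReal (betaNat r m) := by
  rw [← ENNReal.ofReal_tsum_of_nonneg (fun j => betaNat_nonneg _ _)
    (hasSum_betaNat_succ_left r m).summable, (hasSum_betaNat_succ_left r m).tsum_eq]

theorem h_nonneg (r n : ℕ) : 0 ≤ h r n := by
  induction r generalizing n with
  | zero => simp [h]
  | succ r ih => exact Finset.sum_nonneg fun k _ => ih (k + 1)

theorem h_zero_mul_betaNat_zero (n : ℕ) : h 0 (n + 1) * betaNat 0 (n + 1) = betaNat 1 n := by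
  rw [betaNat_succ_left, betaNat_zero_left, betaNat_zero_left, h]
  push_cast
  field_simp
  ring

theorem tsum_ofReal_h_mul_betaNat (r : ℕ) :
    ∑' n, ENNReal.ofReal (h r (n + 1) * betaNat r (n + 1)) = 1 := by
  induction r with
  | zero =>
    simp only [h_zero_mul_betaNat_zero]
    simpa [betaNat_zero_left] using tsum_ofReal_betaNat_succ_left 0 0
  | succ r ih =>
    calc ∑' n, ENNReal.ofReal (h (r + 1) (n + 1) * betaNat (r + 1) (n + 1))
        = ∑' n, (∑ k ∈ range (n + 1), ENNReal.ofReal (h r (k + 1))) *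
            ENNReal.ofReal (betaNat (r + 1) (n + 1)) := by
          refine tsum_congr fun n => ?_
          rw [h, ENNReal.ofReal_mul (sum_nonneg fun k _ => h_nonneg r _),
            ENNReal.ofReal_sum_of_nonneg fun k _ => h_nonneg r _]
      _ = ∑' k, ENNReal.ofReal (h r (k + 1)) * ENNReal.ofReal (betaNat r (k + 1)) := by
          rw [ENNReal.tsum_sum_range_succ_mul]
          simp_rw [add_assoc, tsum_ofReal_betaNat_succ_left]
      _ = 1 := by simpa only [ENNReal.ofReal_mul (h_nonneg r _)] using ih

theorem stmt17_general (r : ℕ) :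
    ∑' n : ℕ, h r (n + 1) * ∫ t in (0 : ℝ)..1, t ^ r * (1 - t) ^ (n + 1) = 1 := by
  have hterm (n : ℕ) : h r (n + 1) * betaNat r (n + 1) =
      (ENNReal.ofReal (h r (n + 1) * betaNat r (n + 1))).toReal :=
    (ENNReal.toReal_ofReal (mul_nonneg (h_nonneg r _) (betaNat_nonneg r _))).symm
  change ∑' n, h r (n + 1) * betaNat r (n + 1) = 1
  rw [tsum_congr hterm, ← ENNReal.tsum_toReal_eq fun _ => ENNReal.ofReal_ne_top,
    tsum_ofReal_h_mul_betaNat, ENNReal.toReal_one]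

theorem stmt17 (r : ℕ) (hr : 1 ≤ r) :
    ∑' n : ℕ, h r (n + 1) * ∫ t in (0 : ℝ)..1, t ^ r * (1 - t) ^ (n + 1) = 1 :=
  stmt17_general r
end
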